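/- arXiv:1005.4548 — 4 statements merged into one kernel-verified Lean document; each statement's English description precedes it below -/
import Mathlib

section
/- For every element a of the finite field F_{2^n}, the binary Kloosterman sum K(a) = Σ_{x ∈ F_{2^n}} (-1)^{Tr(x^{2^n - 2} + a·x)} is divisible by 4, where Tr : F_{2^n} → F_2 is the absolute trace and (-1)^t means (-1) raised to the lift of t ∈ F_2 to {0,1}. -/
/-- The binary Kloosterman sum `K(a) = Σ_{x ∈ F_{2^n}} (-1)^{Tr(x^{2^n-2} + a x)}`
is divisible by 4. -/
theorem kloosterman_div_four (n : ℕ) (hn : 2 ≤ n)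
    (F : Type*) [Field F] [Fintype F] [Algebra (ZMod 2) F]
    (hcard : Fintype.card F = 2 ^ n) (a : F) :
    (4 : ℤ) ∣
      ∑ x : F, (-1 : ℤ) ^ (Algebra.trace (ZMod 2) F (x ^ (2 ^ n - 2) + a * x)).val := by
  have h4 : (4 : ℕ) ≤ 2 ^ n := by
    calc (4:ℕ) = 2 ^ 2 := rfl
    _ ≤ 2 ^ n := Nat.pow_le_pow_right (by norm_num) hn
  set f : F → ZMod 2 := fun x => Algebra.trace (ZMod 2) F (x ^ (2 ^ n - 2) + a * x) with hf
  -- sum of arguments is zero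
  have hsum0 : ∑ x : F, (x ^ (2 ^ n - 2) + a * x) = 0 := by
    rw [Finset.sum_add_distrib]
    have h1 : ∑ x : F, x ^ (2 ^ n - 2) = 0 := by
      apply FiniteField.sum_pow_lt_card_sub_one
      rw [hcard]; omega
    have h2 : ∑ x : F, a * x = 0 := by
      rw [← Finset.mul_sum]
      have := FiniteField.sum_pow_lt_card_sub_one F 1 (by rw [hcard]; omega)
      simp only [pow_one] at this
      rw [this, mul_zero]
    rw [h1, h2, add_zero]
  have htr : ∑ x : F, f x = 0 := by
    simp only [hf]
    rw [← map_sum, hsum0, map_zero]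
  have hpar : 2 ∣ ∑ x : F, (f x).val := by
    have hc : ((∑ x : F, (f x).val : ℕ) : ZMod 2) = 0 := by
      rw [Nat.cast_sum]
      have : ∀ x : F, (((f x).val : ℕ) : ZMod 2) = f x := fun x =>
        ZMod.natCast_zmod_val (f x)
      simp only [this]
      exact htr
    exact (ZMod.natCast_eq_zero_iff _ _).mp hc
  have hterm : ∀ b : ZMod 2, (-1 : ℤ) ^ b.val = 1 - 2 * (b.val : ℤ) := by decide
  have hsum : ∑ x : F, (-1 : ℤ) ^ (f x).val
      = (Fintype.card F : ℤ) - 2 * (∑ x : F, (f x).val : ℕ) := by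
    simp only [hterm]
    rw [Finset.sum_sub_distrib, Finset.sum_const, Finset.card_univ, ← Finset.mul_sum,
      Nat.cast_sum]

    ring
  show (4:ℤ) ∣ ∑ x : F, (-1 : ℤ) ^ (f x).val
  rw [hsum, hcard]
  obtain ⟨m, hm⟩ := hpar
  rw [hm]
  obtain ⟨k, hk⟩ : (4:ℕ) ∣ 2 ^ n := by
    have : (2:ℕ)^2 ∣ 2 ^ n := pow_dvd_pow 2 hn
    simpa using this
  rw [hk]
  push_cast
  ring_nf
  exact ⟨k - m, by ring⟩
end

section
/- For q = 2^n and a ∈ F_q, the Kloosterman sum satisfies K(a) ≡ -Σ_{j=1}^{q-2} g(j)² ω^j(a) (mod 2^n) in the ring of integers of ℚ_2(ξ), where g(j) = τ(ω^{-j}). -/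
/-!
Write `ψ x = (-1) ^ Tr x` and `T` for the Teichmüller lift. Since `x ^ (q - 2) = x⁻¹` on `F_qˣ`,
`K(a) = ψ (0 ^ (q - 2)) + B(a)` with `B(a) = ∑_{x ≠ 0} ψ x ψ (a / x)`. Expanding `g(j)²` and
summing over `j < q - 1`, orthogonality of the powers of the injective character `T` on `F_qˣ`
leaves only the pairs `x y = a`, so `∑_{j < q - 1} g(j)² T(a)^j = (q - 1) B(a)` for `a ≠ 0`;
as `g(0) = 1`, the difference in the congruence is `q B(a) + ψ (0 ^ (q - 2)) - 1`. For `a = 0`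
it is `ψ (0 ^ (q - 2)) - 1` alone. This last term vanishes unless `q = 2`, where `0 ^ 0 = 1`
makes it `(-1) ^ k - 1 ∈ {0, -2}`.
-/

open Finset

lemma Fintype.sum_eq_add_sum_units {K M : Type*} [GroupWithZero K] [Fintype K] [DecidableEq K]
    [AddCommMonoid M] (f : K → M) : ∑ x, f x = f 0 + ∑ u : Kˣ, f u := by
  rw [← add_sum_erase _ f (mem_univ 0), sum_subtype (univ.erase 0) (p := (· ≠ 0)) (by simp) f]
  exact congrArg _ (Fintype.sum_equiv unitsEquivNeZero _ _ fun _ => rfl).symm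

lemma geom_sum_card_eq_ite_of_injective {G R : Type*} [Group G] [Fintype G] [DecidableEq G]
    [CommRing R] [IsDomain R] {χ : G →* R} (hχ : Function.Injective χ) (u : G) :
    ∑ j ∈ range (Fintype.card G), χ u ^ j = if u = 1 then (Fintype.card G : R) else 0 := by
  split_ifs with hu
  · simp [hu]
  · have hne : χ u - 1 ≠ 0 := sub_ne_zero.mpr fun h => hu (hχ (h.trans χ.map_one.symm))
    apply (mul_left_inj' hne).mp
    rw [geom_sum_mul, ← map_pow, pow_card_eq_one, map_one, sub_self, zero_mul]

lemma sum_range_sq_sum_mul_pow {G R : Type*} [CommGroup G] [Fintype G] [DecidableEq G]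
    [CommRing R] (χ : G →* R) {m : ℕ}
    (horth : ∀ u, ∑ j ∈ range m, χ u ^ j = if u = 1 then (m : R) else 0) (ψ : G → R) (a : G) :
    ∑ j ∈ range m, (∑ x, χ x⁻¹ ^ j * ψ x) ^ 2 * χ a ^ j = m * ∑ x, ψ x * ψ (a * x⁻¹) := by
  calc ∑ j ∈ range m, (∑ x, χ x⁻¹ ^ j * ψ x) ^ 2 * χ a ^ j
      = ∑ j ∈ range m, ∑ x, ∑ y, ψ x * ψ y * χ (x⁻¹ * y⁻¹ * a) ^ j := by
        refine sum_congr rfl fun j _ => ?_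
        rw [sq, sum_mul_sum, sum_mul]
        refine sum_congr rfl fun x _ => ?_
        rw [sum_mul]
        refine sum_congr rfl fun y _ => ?_
        simp only [map_mul, mul_pow]
        ring
    _ = ∑ x, ∑ y, ψ x * ψ y * if y = a * x⁻¹ then (m : R) else 0 := by
        rw [sum_comm]
        refine sum_congr rfl fun x _ => ?_
        rw [sum_comm]
        refine sum_congr rfl fun y _ => ?_
        rw [← mul_sum, horth]
        congr 2
        apply propext
        rw [mul_right_comm, mul_inv_eq_one, eq_comm, mul_comm]
    _ = m * ∑ x, ψ x * ψ (a * x⁻¹) := by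
        simp only [mul_ite, mul_zero, sum_ite_eq', mem_univ, if_true, mul_sum]
        exact sum_congr rfl fun _ _ => by ring

lemma FiniteField.pow_card_sub_two_eq_inv {K : Type*} [GroupWithZero K] [Fintype K] {a : K}
    (ha : a ≠ 0) : a ^ (Fintype.card K - 2) = a⁻¹ := by
  refine eq_inv_of_mul_eq_one_left ?_
  rw [← pow_succ, ← FiniteField.pow_card_sub_one_eq_one a ha]
  have := Fintype.one_lt_card (α := K)
  congr 1
  omega

section Kloosterman

variable {F R : Type*} [Field F] [Fintype F] [DecidableEq F] [CommRing R]

lemma sum_addChar_pow_card_sub_two_add_mul (ψ : AddChar F R) (a : F) :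
    ∑ x, ψ (x ^ (Fintype.card F - 2) + a * x)
      = ψ (0 ^ (Fintype.card F - 2)) + ∑ u : Fˣ, ψ u * ψ (a * (u⁻¹ : Fˣ)) := by
  rw [Fintype.sum_eq_add_sum_units, mul_zero, add_zero,
    ← Fintype.sum_equiv (Equiv.inv Fˣ) _ _ fun _ => rfl]
  congr 1
  refine sum_congr rfl fun u _ => ?_
  rw [← AddChar.map_add_eq_mul, Equiv.inv_apply, FiniteField.pow_card_sub_two_eq_inv (by simp),
    Units.val_inv_eq_inv_val, inv_inv]

lemma sum_range_sq_sum_teichmuller_mul_pow {p : ℕ} [Fact p.Prime] [CharP F p]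
    (ψ : AddChar F (WittVector p F)) {a : F} (ha : a ≠ 0) :
    ∑ j ∈ range (Fintype.card F - 1),
        (∑ x : Fˣ, WittVector.teichmuller p ((x⁻¹ : Fˣ) : F) ^ j * ψ x) ^ 2
          * WittVector.teichmuller p (a ^ j)
      = (Fintype.card F - 1 : ℕ) * ∑ u : Fˣ, ψ u * ψ (a * (u⁻¹ : Fˣ)) := by
  set χ : Fˣ →* WittVector p F := (WittVector.teichmuller p).comp (Units.coeHom F)
  have hχ : Function.Injective χ := fun x y h => Units.ext <| by
    simpa [χ] using congrArg (WittVector.coeff · 0) h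
  have horth := geom_sum_card_eq_ite_of_injective hχ
  rw [Fintype.card_units] at horth
  simpa [χ] using sum_range_sq_sum_mul_pow χ horth (fun u => ψ u) (Units.mk0 a ha)

end Kloosterman

section TraceChar

variable (F R : Type*) [Field F] [Algebra (ZMod 2) F] [CommRing R]

noncomputable def traceChar : AddChar F R :=
  (AddChar.zmodChar (C := R) 2 neg_one_sq).compAddMonoidHom
    (Algebra.trace (ZMod 2) F).toAddMonoidHom

variable {F R}

lemma traceChar_apply (x : F) : traceChar F R x = (-1) ^ (Algebra.trace (ZMod 2) F x).val := rfl

variable [Fintype F]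

lemma sum_traceChar : ∑ x, traceChar F R x = 0 := by
  have hψ : traceChar F ℤ ≠ 1 := by
    obtain ⟨c, hc⟩ := Algebra.trace_surjective (ZMod 2) F 1
    refine AddChar.ne_one_iff.mpr ⟨c, ?_⟩
    rw [traceChar_apply, hc]
    decide
  have := congrArg (Int.cast : ℤ → R) (AddChar.sum_eq_zero_of_ne_one hψ)
  simpa [traceChar_apply] using this

lemma sum_units_traceChar [DecidableEq F] : ∑ u : Fˣ, traceChar F R u = -1 := by
  have := sum_traceChar (F := F) (R := R)
  rw [Fintype.sum_eq_add_sum_units, AddChar.map_zero_eq_one] at this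
  linear_combination this

lemma card_dvd_traceChar_zero_pow_card_sub_two_sub_one :
    (Fintype.card F : R) ∣ traceChar F R (0 ^ (Fintype.card F - 2)) - 1 := by
  rcases Nat.eq_zero_or_pos (Fintype.card F - 2) with h | h
  · have hq : Fintype.card F = 2 := by have := Fintype.one_lt_card (α := F); omega
    rw [h, hq, pow_zero, traceChar_apply]
    rcases neg_one_pow_eq_or R (Algebra.trace (ZMod 2) F 1).val with h1 | h1 <;> rw [h1]
    · simp
    · exact ⟨-1, by push_cast; ring⟩
  · rw [zero_pow h.ne', AddChar.map_zero_eq_one, sub_self]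
    exact dvd_zero _

end TraceChar

lemma card_dvd_sum_traceChar_add_sum_sq_mul_teichmuller {F : Type*} [Field F] [Fintype F]
    [DecidableEq F] [CharP F 2] [Algebra (ZMod 2) F] (a : F) :
    (Fintype.card F : WittVector 2 F) ∣ ∑ x, traceChar F _ (x ^ (Fintype.card F - 2) + a * x)
      + ∑ j ∈ Icc 1 (Fintype.card F - 2),
          (∑ x : Fˣ, WittVector.teichmuller 2 ((x⁻¹ : Fˣ) : F) ^ j * traceChar F _ x) ^ 2
            * WittVector.teichmuller 2 (a ^ j) := by
  have hdefect := card_dvd_traceChar_zero_pow_card_sub_two_sub_one (F := F) (R := WittVector 2 F)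
  rw [sum_addChar_pow_card_sub_two_add_mul]
  rcases eq_or_ne a 0 with rfl | ha
  · rw [sum_eq_zero (s := Icc _ _) fun j hj => by
      rw [zero_pow (by grind), WittVector.teichmuller_zero, mul_zero]]
    simpa [sum_units_traceChar, sub_eq_add_neg] using hdefect
  · have hsum := sum_range_sq_sum_teichmuller_mul_pow (traceChar F _) ha
    obtain ⟨m, hm⟩ : ∃ m, Fintype.card F = m + 2 :=
      ⟨_, (Nat.sub_add_cancel Fintype.one_lt_card).symm⟩
    simp only [hm, Nat.add_sub_cancel] at hsum hdefect ⊢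
    rw [show m + 2 - 1 = m + 1 by omega, sum_range_eq_add_Ico _ m.add_one_pos,
      Ico_add_one_right_eq_Icc] at hsum
    simp only [pow_zero, map_one, mul_one, one_mul, sum_units_traceChar, neg_one_sq] at hsum
    convert dvd_add hdefect (dvd_mul_right _
      (∑ u : Fˣ, traceChar F _ u * traceChar F _ (a * (u⁻¹ : Fˣ)))) using 1
    push_cast at hsum ⊢
    linear_combination hsum

theorem kloosterman_gauss_sum_congruence_general (n : ℕ)
    (F : Type*) [Field F] [Fintype F] [DecidableEq F] [CharP F 2] [Algebra (ZMod 2) F]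
    (hcard : Fintype.card F = 2 ^ n) (a : F)
    (g : ℕ → WittVector 2 F)
    (hg : ∀ j, g j = - ∑ x : Fˣ, (WittVector.teichmuller 2 ((x⁻¹ : Fˣ) : F)) ^ j
          * (-1) ^ (Algebra.trace (ZMod 2) F x).val) :
    ((2 : WittVector 2 F) ^ n) ∣
      ((∑ x : F, (-1 : ℤ) ^ (Algebra.trace (ZMod 2) F (x ^ (2 ^ n - 2) + a * x)).val :
          ℤ) : WittVector 2 F)
        - (- ∑ j ∈ Finset.Icc 1 (2 ^ n - 2),
              (g j) ^ 2 * WittVector.teichmuller 2 (a ^ j)) := by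
  have h := card_dvd_sum_traceChar_add_sum_sq_mul_teichmuller a
  simp only [hcard, traceChar_apply] at h
  simp only [hg, neg_sq, sub_neg_eq_add]
  push_cast
  exact_mod_cast h

/-- For `q = 2^n` and `a ∈ F_q`, the Kloosterman sum satisfies
`K(a) ≡ -Σ_{j=1}^{q-2} g(j)² ω^j(a) (mod 2^n)` in the ring of integers `𝕎(F_q)`
of `ℚ₂(ξ)`, where `g(j) = τ(ω^{-j})` and `ω` is the Teichmüller character. -/
theorem kloosterman_gauss_sum_congruence (n : ℕ) (hn : 1 ≤ n)
    (F : Type*) [Field F] [Fintype F] [DecidableEq F] [CharP F 2] [Algebra (ZMod 2) F]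
    (hcard : Fintype.card F = 2 ^ n) (a : F)
    (g : ℕ → WittVector 2 F)
    (hg : ∀ j, g j = - ∑ x : Fˣ, (WittVector.teichmuller 2 ((x⁻¹ : Fˣ) : F)) ^ j
          * (-1) ^ (Algebra.trace (ZMod 2) F x).val) :
    ((2 : WittVector 2 F) ^ n) ∣
      ((∑ x : F, (-1 : ℤ) ^ (Algebra.trace (ZMod 2) F (x ^ (2 ^ n - 2) + a * x)).val :
          ℤ) : WittVector 2 F)
        - (- ∑ j ∈ Finset.Icc 1 (2 ^ n - 2),
              (g j) ^ 2 * WittVector.teichmuller 2 (a ^ j)) :=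
  kloosterman_gauss_sum_congruence_general n F hcard a g hg
end

section
/- Let q = 2^n and a ∈ F_q with lifted trace T̂(a) = Σ_{i=0}^{n-1} ω(a^{2^i}) and quadratic trace Q(a) = Σ_{0≤i<j<n} a^{2^i+2^j} ∈ F_2. Then: T̂(a) ≡ 0 (mod 4) iff Tr(a)=0 and Q(a)=0; T̂(a) ≡ 1 (mod 4) iff Tr(a)=1 and Q(a)=0; T̂(a) ≡ 2 (mod 4) iff Tr(a)=0 and Q(a)=1; T̂(a) ≡ 3 (mod 4) iff Tr(a)=1 and Q(a)=1. (Congruences in the ring of integers of ℚ_2(ξ).) -/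
/-!
Modulo `4 = 2²`, a Witt vector over a perfect ring of characteristic 2 is determined by its
first two coordinates. Since `(x + y)₁ = x₁ + y₁ - x₀ y₀`, the first two coordinates of a sum
of Teichmüller lifts `∑ ω(bᵢ)` are the elementary symmetric functions `∑ bᵢ` and `∑_{i<j} bᵢ bⱼ`
(up to sign, irrelevant in characteristic 2). For the conjugates `bᵢ = a^(2^i)` these are
`Tr(a)` and `Q(a)`, and the residues `0, 1, 2, 3` have coordinates `(0,0), (1,0), (0,1), (1,1)`.
-/

open MvPolynomial Finset WittVector

namespace WittVector

theorem wittAdd_two_one : wittAdd 2 1 = X (0, 1) + X (1, 1) - X (0, 0) * X (1, 0) := by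
  apply MvPolynomial.map_injective (Int.castRingHom ℚ) Int.cast_injective
  rw [show wittAdd 2 1 = wittStructureInt 2 (X 0 + X 1) 1 from rfl, map_wittStructureInt]
  set Φ := MvPolynomial.map (Int.castRingHom ℚ) (X 0 + X 1 : MvPolynomial (Fin 2) ℤ)
  have h0 : wittStructureRat 2 Φ 0 = X (0, 0) + X (1, 0) := by
    rw [wittStructureRat_rec]
    simp [Φ, wittPolynomial_zero]
  -- the first ghost equation: `(x₀ + y₀)² + 2 s₁ = x₀² + 2 x₁ + y₀² + 2 y₁`
  have h1 := wittStructureRat_rec_aux 2 Φ 1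
  rw [sum_range_one, h0] at h1
  simp only [Φ, map_add, map_sub, map_mul, map_X, map_pow, wittPolynomial_one, bind₁_X_right,
    rename_X, pow_zero, pow_one, Nat.cast_ofNat, map_ofNat, C_1, tsub_zero] at h1 ⊢
  apply mul_right_cancel₀ (two_ne_zero (α := MvPolynomial (Fin 2 × ℕ) ℚ))
  linear_combination h1

theorem add_coeff_one_of_two {R : Type*} [CommRing R] (x y : WittVector 2 R) :
    (x + y).coeff 1 = x.coeff 1 + y.coeff 1 - x.coeff 0 * y.coeff 0 := by
  simp [add_coeff, wittAdd_two_one, peval, Function.uncurry]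

section PerfectRing

variable {p : ℕ} [Fact p.Prime] {k : Type*} [CommRing k] [CharP k p] [PerfectRing k p]

theorem pow_p_dvd_iff_coeff_eq_zero (n : ℕ) (x : WittVector p k) :
    (p : WittVector p k) ^ n ∣ x ↔ ∀ i < n, x.coeff i = 0 := by
  constructor
  · rintro ⟨y, rfl⟩ i hi
    rw [mul_comm]
    exact mul_pow_charP_coeff_zero y hi
  · intro hx
    obtain ⟨y, hy⟩ := ((frobenius_bijective p k).surjective.iterate n) (x.shift n)
    refine ⟨y, ?_⟩
    rw [eq_iterate_verschiebung hx, ← hy, iterate_verschiebung_iterate_frobenius, mul_comm]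

end PerfectRing

variable {R : Type*} [CommRing R]

theorem four_dvd_sub_iff [CharP R 2] [PerfectRing R 2] (x y : WittVector 2 R) :
    4 ∣ x - y ↔ x.coeff 0 = y.coeff 0 ∧ x.coeff 1 = y.coeff 1 := by
  obtain ⟨d, rfl⟩ : ∃ d, x = d + y := ⟨x - y, (sub_add_cancel x y).symm⟩
  rw [add_sub_cancel_right, add_coeff_zero, add_coeff_one_of_two,
    show (4 : WittVector 2 R) = ((2 : ℕ) : WittVector 2 R) ^ 2 by norm_num,
    pow_p_dvd_iff_coeff_eq_zero]
  simp only [Nat.forall_lt_succ_right, Nat.lt_one_iff, forall_eq, add_eq_right]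
  constructor
  · rintro ⟨h0, h1⟩
    simp [h0, h1]
  · rintro ⟨h0, h1⟩
    exact ⟨h0, by simpa [h0] using h1⟩

theorem sum_teichmuller_coeff_zero {p : ℕ} [Fact p.Prime] (b : ℕ → R) (n : ℕ) :
    (∑ i ∈ range n, teichmuller p (b i)).coeff 0 = ∑ i ∈ range n, b i := by
  rw [← constantCoeff_apply, map_sum]
  simp only [constantCoeff_apply, teichmuller_coeff_zero]

theorem sum_teichmuller_coeff_one (b : ℕ → R) (n : ℕ) :
    (∑ i ∈ range n, teichmuller 2 (b i)).coeff 1 = -∑ j ∈ range n, ∑ i ∈ range j, b i * b j := by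
  induction n with
  | zero => simp
  | succ n ih =>
    rw [sum_range_succ, add_coeff_one_of_two, ih, teichmuller_coeff_pos 2 _ 1 one_pos,
      teichmuller_coeff_zero, sum_teichmuller_coeff_zero, sum_range_succ, sum_mul]
    ring

variable [CharP R 2]

theorem two_coeff_zero : (2 : WittVector 2 R).coeff 0 = 0 := by
  exact_mod_cast coeff_p_zero 2 R

theorem two_coeff_one : (2 : WittVector 2 R).coeff 1 = 1 := by
  exact_mod_cast coeff_p_one 2 R

theorem three_coeff_zero : (3 : WittVector 2 R).coeff 0 = 1 := by
  rw [show (3 : WittVector 2 R) = 2 + 1 by norm_num, add_coeff_zero, two_coeff_zero,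
    one_coeff_zero, zero_add]

theorem three_coeff_one : (3 : WittVector 2 R).coeff 1 = 1 := by
  rw [show (3 : WittVector 2 R) = 2 + 1 by norm_num, add_coeff_one_of_two, two_coeff_zero,
    two_coeff_one, one_coeff_eq_of_pos 2 R 1 one_pos]
  ring

end WittVector

theorem FiniteField.algebraMap_trace_zmod_eq_sum_pow {p : ℕ} [Fact p.Prime] {F : Type*} [Field F]
    [Fintype F] [Algebra (ZMod p) F] {n : ℕ} (hcard : Fintype.card F = p ^ n) (a : F) :
    algebraMap (ZMod p) F (Algebra.trace (ZMod p) F a) = ∑ i ∈ range n, a ^ p ^ i := by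
  have hrank : Module.finrank (ZMod p) F = n := by
    rw [Module.card_eq_pow_finrank (K := ZMod p), ZMod.card] at hcard
    exact Nat.pow_right_injective (Fact.out : p.Prime).two_le hcard
  rw [FiniteField.algebraMap_trace_eq_sum_pow, hrank, Nat.card_zmod]

theorem lifted_trace_mod_four_general (n : ℕ)
    (F : Type*) [Field F] [Fintype F] [CharP F 2] [Algebra (ZMod 2) F]
    (hcard : Fintype.card F = 2 ^ n) (a : F)
    (T : WittVector 2 F)
    (hT : T = ∑ i ∈ Finset.range n, WittVector.teichmuller 2 (a ^ 2 ^ i))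
    (Q : F) (hQ : Q = ∑ i ∈ Finset.range n, ∑ j ∈ Finset.Ioo i n, a ^ (2 ^ i + 2 ^ j)) :
    ((4 : WittVector 2 F) ∣ T - 0 ↔ Algebra.trace (ZMod 2) F a = 0 ∧ Q = 0) ∧
    ((4 : WittVector 2 F) ∣ T - 1 ↔ Algebra.trace (ZMod 2) F a = 1 ∧ Q = 0) ∧
    ((4 : WittVector 2 F) ∣ T - 2 ↔ Algebra.trace (ZMod 2) F a = 0 ∧ Q = 1) ∧
    ((4 : WittVector 2 F) ∣ T - 3 ↔ Algebra.trace (ZMod 2) F a = 1 ∧ Q = 1) := by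
  have hT0 : T.coeff 0 = algebraMap (ZMod 2) F (Algebra.trace (ZMod 2) F a) := by
    rw [hT, sum_teichmuller_coeff_zero, FiniteField.algebraMap_trace_zmod_eq_sum_pow hcard]
  have hT1 : T.coeff 1 = Q := by
    rw [hT, sum_teichmuller_coeff_one, CharTwo.neg_eq, hQ,
      sum_comm' (t := fun i => Ioo i n) (s' := range) (t' := range n)
        (fun i j => by simp only [mem_range, mem_Ioo]; omega)]
    simp only [pow_add]
  simp only [four_dvd_sub_iff, hT0, hT1, zero_coeff, one_coeff_zero,
    one_coeff_eq_of_pos 2 F 1 one_pos, two_coeff_zero, two_coeff_one, three_coeff_zero,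
    three_coeff_one, FaithfulSMul.algebraMap_eq_zero_iff, FaithfulSMul.algebraMap_eq_one_iff,
    and_self]

/-- The lifted trace `T̂(a)` mod 4 is determined by `Tr(a)` and the quadratic trace
`Q(a)`: `T̂(a) ≡ 0,1,2,3 (mod 4)` according to `(Tr(a),Q(a)) = (0,0),(1,0),(0,1),(1,1)`. -/
theorem lifted_trace_mod_four (n : ℕ) (hn : 1 ≤ n)
    (F : Type*) [Field F] [Fintype F] [CharP F 2] [Algebra (ZMod 2) F]
    (hcard : Fintype.card F = 2 ^ n) (a : F)
    (T : WittVector 2 F)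
    (hT : T = ∑ i ∈ Finset.range n, WittVector.teichmuller 2 (a ^ 2 ^ i))
    (Q : F) (hQ : Q = ∑ i ∈ Finset.range n, ∑ j ∈ Finset.Ioo i n, a ^ (2 ^ i + 2 ^ j)) :
    ((4 : WittVector 2 F) ∣ T - 0 ↔ Algebra.trace (ZMod 2) F a = 0 ∧ Q = 0) ∧
    ((4 : WittVector 2 F) ∣ T - 1 ↔ Algebra.trace (ZMod 2) F a = 1 ∧ Q = 0) ∧
    ((4 : WittVector 2 F) ∣ T - 2 ↔ Algebra.trace (ZMod 2) F a = 0 ∧ Q = 1) ∧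
    ((4 : WittVector 2 F) ∣ T - 3 ↔ Algebra.trace (ZMod 2) F a = 1 ∧ Q = 1) :=
  lifted_trace_mod_four_general n F hcard a T hT Q hQ
end

section
/- If x ≡ y (mod 2^k) with k ≥ 3, then Γ₂(x) ≡ Γ₂(y) (mod 2^k), where Γ₂(k) = (-1)^k ∏_{t<k, t odd} t is the 2-adic Gamma function on ℕ. -/
/-!
Shifting the argument by `2 ^ k` multiplies `Γ₂` by the sign `(-1) ^ 2 ^ k = 1` and by the product
of the odd numbers in a window of length `2 ^ k`; modulo `2 ^ k` that product is periodic in the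
window, hence equal to the product `P k` of the odd numbers below `2 ^ k`. For `k ≥ 3`,
`P k ≡ 1 (mod 2 ^ k)` by induction: the odd numbers in `[2 ^ k, 2 ^ (k + 1))` are the
`2 ^ (k + 1) - t` with `t < 2 ^ k` odd, so `P (k + 1) ≡ (-1) ^ 2 ^ (k - 1) * P k ^ 2 = P k ^ 2`
modulo `2 ^ (k + 1)`, and `P k ≡ 1 (mod 2 ^ k)` gives `P k ^ 2 ≡ 1 (mod 2 ^ (k + 1))`.
-/

/-- The 2-adic Gamma function on naturals, `Γ₂(k) = (-1)^k ∏_{0 < t < k, t odd} t`. -/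
def gammaTwo (k : ℕ) : ℤ :=
  (-1) ^ k * ∏ t ∈ (Finset.range k).filter (fun t => Odd t), (t : ℤ)

open Finset Function

theorem Function.Periodic.prod_Ico_add_eq_prod_range {M : Type*} [CommMonoid M] {f : ℕ → M}
    {m : ℕ} (hf : Periodic f m) (x : ℕ) : ∏ t ∈ Ico x (x + m), f t = ∏ t ∈ range m, f t := by
  rcases Nat.eq_zero_or_pos m with rfl | hm
  · simp
  induction x with
  | zero => rw [zero_add, range_eq_Ico]
  | succ x ih =>
    rw [← ih, Nat.add_right_comm, prod_Ico_succ_top (by omega), hf, mul_comm,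
      ← prod_eq_prod_Ico_succ_bot (by omega)]

theorem prod_filter_odd_range_two_mul {M : Type*} [CommMonoid M] (f : ℕ → M) (n : ℕ) :
    ∏ t ∈ range (2 * n) with Odd t, f t = ∏ i ∈ range n, f (2 * i + 1) := by
  induction n with
  | zero => simp
  | succ n ih =>
    rw [mul_add_one, prod_filter, prod_range_succ, prod_range_succ, ← prod_filter, ih,
      prod_range_succ]
    simp

theorem periodic_ite_odd_natCast {m : ℕ} (hm : Even m) :
    Periodic (fun t : ℕ => if Odd t then (t : ZMod m) else 1) m := by
  intro t
  simp [Nat.odd_add, hm]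

theorem Int.sq_modEq_one_of_modEq_one {a n : ℤ} (hn : 2 ∣ n) (h : a ≡ 1 [ZMOD n]) :
    a ^ 2 ≡ 1 [ZMOD 2 * n] := by
  obtain ⟨m, rfl⟩ := hn
  obtain ⟨c, hc⟩ := h.symm.dvd
  obtain rfl : a = 2 * m * c + 1 := by linarith
  exact (Int.modEq_iff_dvd.2 ⟨c * (m * c + 1), by ring⟩).symm

theorem prod_range_two_mul_add_add_one_modEq {N : ℕ} (hN : Even N) :
    ∏ i ∈ range N, (2 * ((N + i : ℕ) : ℤ) + 1) ≡ ∏ i ∈ range N, (2 * (i : ℤ) + 1)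
      [ZMOD 4 * N] := by
  -- reversing the order pairs `2 * (N + i) + 1` with `4 * N - (2 * i + 1)`
  rw [← prod_range_reflect]
  calc ∏ i ∈ range N, (2 * ((N + (N - 1 - i) : ℕ) : ℤ) + 1)
      ≡ ∏ i ∈ range N, -(2 * (i : ℤ) + 1) [ZMOD 4 * N] := by
        refine Int.ModEq.prod fun i hi => Int.modEq_iff_dvd.2 ⟨-1, ?_⟩
        have : i < N := mem_range.1 hi
        push_cast [Nat.sub_sub, Nat.cast_sub (show 1 + i ≤ N by omega)]
        ring
    _ = ∏ i ∈ range N, (2 * (i : ℤ) + 1) := by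
        rw [prod_neg, card_range, hN.neg_one_pow, one_mul]

theorem prod_range_two_pow_odd_modEq_one {k : ℕ} (hk : 2 ≤ k) :
    ∏ i ∈ range (2 ^ k), (2 * (i : ℤ) + 1) ≡ 1 [ZMOD 2 ^ (k + 1)] := by
  induction k, hk using Nat.le_induction with
  | base => decide
  | succ k hk ih =>
    have hN : Even (2 ^ k) := Nat.even_pow.2 ⟨even_two, by omega⟩
    have hmod : 4 * ((2 ^ k : ℕ) : ℤ) = 2 ^ (k + 1 + 1) := by push_cast; ring
    rw [show range (2 ^ (k + 1)) = range (2 ^ k + 2 ^ k) by rw [pow_succ, mul_two],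
      prod_range_add]
    calc _ ≡ (∏ i ∈ range (2 ^ k), (2 * (i : ℤ) + 1)) ^ 2 [ZMOD 2 ^ (k + 1 + 1)] := by
          rw [sq, ← hmod]
          exact (Int.ModEq.refl _).mul (prod_range_two_mul_add_add_one_modEq hN)
      _ ≡ 1 [ZMOD 2 ^ (k + 1 + 1)] := by
          rw [pow_succ' _ (k + 1)]
          exact Int.sq_modEq_one_of_modEq_one (dvd_pow_self 2 (by omega)) ih

theorem prod_filter_odd_range_two_pow_eq_one {k : ℕ} (hk : 3 ≤ k) :
    ∏ t ∈ range (2 ^ k) with Odd t, (t : ZMod (2 ^ k)) = 1 := by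
  obtain ⟨j, rfl⟩ : ∃ j, k = j + 1 := ⟨k - 1, by omega⟩
  rw [show range (2 ^ (j + 1)) = range (2 * 2 ^ j) by rw [pow_succ'],
    prod_filter_odd_range_two_mul]
  have h := (ZMod.intCast_eq_intCast_iff (∏ i ∈ range (2 ^ j), (2 * (i : ℤ) + 1)) 1
    (2 ^ (j + 1))).2 (by exact_mod_cast prod_range_two_pow_odd_modEq_one (by omega))
  push_cast at h ⊢
  exact h

theorem gammaTwo_periodic {k : ℕ} (hk : 3 ≤ k) :
    Periodic (fun n => (gammaTwo n : ZMod (2 ^ k))) (2 ^ k) := by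
  intro n
  have h2k : Even (2 ^ k) := Nat.even_pow.2 ⟨even_two, by omega⟩
  simp only [gammaTwo, Int.cast_mul, Int.cast_pow, Int.cast_neg, Int.cast_one, Int.cast_prod,
    Int.cast_natCast]
  rw [pow_add, h2k.neg_one_pow, mul_one, prod_filter, prod_filter,
    ← prod_range_mul_prod_Ico _ (Nat.le_add_right n _),
    (periodic_ite_odd_natCast h2k).prod_Ico_add_eq_prod_range,
    ← prod_filter (s := range (2 ^ k)), prod_filter_odd_range_two_pow_eq_one hk, mul_one]

/-- If `x ≡ y (mod 2^k)` with `k ≥ 3` then `Γ₂(x) ≡ Γ₂(y) (mod 2^k)`. -/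
theorem gammaTwo_congruent (k : ℕ) (hk : 3 ≤ k) (x y : ℕ)
    (hxy : x ≡ y [MOD 2 ^ k]) :
    gammaTwo x ≡ gammaTwo y [ZMOD 2 ^ k] := by
  have hper := gammaTwo_periodic hk
  have h : (gammaTwo x : ZMod (2 ^ k)) = gammaTwo y :=
    calc (gammaTwo x : ZMod (2 ^ k)) = gammaTwo (x % 2 ^ k) := (hper.map_mod_nat x).symm
      _ = gammaTwo (y % 2 ^ k) := by rw [show x % 2 ^ k = y % 2 ^ k from hxy]
      _ = gammaTwo y := hper.map_mod_nat y
  exact_mod_cast (ZMod.intCast_eq_intCast_iff _ _ _).1 h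
end
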